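/- If E ∈ Der(L) is a finite sum E = Σ_{i=0}^{m} ad(X_i)^{p^i} with X_0, …, X_m ∈ L, then its p-th power E^p (computed in End(L)) is again a finite sum of the same form, i.e. E^p = Σ_{j=0}^{m'} ad(Y_j)^{p^j} for some m' ≥ 0 and Y_0, …, Y_{m'} ∈ L. -/

import Mathlib

/-!
A weak form of Jacobson's formula: in an associative algebra `A` over a field of
characteristic `p`, `(a + b)^p - a^p - b^p` is the sum of the coefficients of `X^n`, `0 < n < p`,
in `f^p` with `f = a X + b`, and `n` times such a coefficient is a coefficient of
`d/dX (f^p) = ∑ f^k a f^(p-1-k) = (ad f)^(p-1) a = (ad f)^(p-2) ⁅b, a⁆`. So the difference lies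
in every subspace `M` that contains `⁅a, b⁆` and is stable under `ad a` and `ad b`.

Take `A = End L` and `M = ad L`. Since `ad (T^(p^i)) = (ad T)^(p^i)` in characteristic `p`, every
`T_i = ad(X_i)^(p^i)` stabilises `ad L`, and `⁅T_i, T_j⁆ ∈ ad L`. Hence
`E^p ≡ ∑ T_i^p = ∑ ad(X_i)^(p^(i+1))` modulo `ad L`, and the error term `ad Y_0` becomes the
summand of index `0`.
-/

open Finset Polynomial

attribute [local instance] LieRing.ofAssociativeRing

section CharP

variable {p : ℕ} [hp : Fact p.Prime]

theorem CharP.cast_choose_sub_one (R : Type*) [Ring R] [CharP R p] {k : ℕ} (hk : k < p) :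
    ((p - 1).choose k : R) = (-1) ^ k := by
  induction k with
  | zero => simp
  | succ k ih =>
    have hpascal := Nat.choose_succ_succ' (p - 1) k
    rw [Nat.sub_add_cancel hp.out.one_le] at hpascal
    have hdvd : (p.choose (k + 1) : R) = 0 :=
      (CharP.cast_eq_zero_iff R p _).2 (hp.out.dvd_choose_self k.succ_ne_zero hk)
    rw [hpascal, Nat.cast_add, ih (by omega), add_eq_zero_iff_neg_eq] at hdvd
    rw [← hdvd, pow_succ, mul_neg_one]

theorem Commute.sub_pow_char_sub_one (𝕜 : Type*) [Field 𝕜] [CharP 𝕜 p] {A : Type*} [Ring A]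
    [Algebra 𝕜 A] {u v : A} (h : Commute u v) :
    (u - v) ^ (p - 1) = ∑ k ∈ range p, u ^ k * v ^ (p - 1 - k) := by
  have hneg : (-1 : 𝕜) ^ (p - 1) = 1 := by
    rw [pow_sub₀ _ (neg_ne_zero.2 one_ne_zero) hp.out.one_le, neg_one_pow_char]
    simp
  have hsign : ∀ k < p, (-1 : A) ^ (p - 1 - k) * ((p - 1).choose k : A) = 1 := by
    intro k hk
    rw [← map_natCast (algebraMap 𝕜 A), CharP.cast_choose_sub_one 𝕜 hk, map_pow, map_neg,
      map_one, ← pow_add, Nat.sub_add_cancel (by omega), ← map_one (algebraMap 𝕜 A), ← map_neg,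
      ← map_pow, hneg]
  rw [sub_eq_add_neg, h.neg_right.add_pow, Nat.sub_add_cancel hp.out.one_le]
  refine sum_congr rfl fun k hk => ?_
  rw [neg_pow, mul_assoc, mul_assoc, ((Commute.neg_one_left _).pow_left _).left_comm,
    hsign k (mem_range.1 hk), mul_one]

variable {𝕜 : Type*} [Field 𝕜] [CharP 𝕜 p] {A : Type*} [Ring A] [Algebra 𝕜 A]

open LieAlgebra LinearMap in
theorem LieAlgebra.ad_pow_char_sub_one (c : A) :
    ad 𝕜 A c ^ (p - 1) = ∑ k ∈ range p, mulLeft 𝕜 c ^ k * mulRight 𝕜 c ^ (p - 1 - k) := by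
  rw [congrFun (ad_eq_lmul_left_sub_lmul_right (R := 𝕜) A) c]
  exact (commute_mulLeft_right c c).sub_pow_char_sub_one 𝕜

open LieAlgebra LinearMap in
theorem LieAlgebra.ad_pow_char_sub_one_apply (c y : A) :
    (ad 𝕜 A c ^ (p - 1)) y = ∑ k ∈ range p, c ^ k * y * c ^ (p - 1 - k) := by
  simp [ad_pow_char_sub_one, pow_mulLeft, pow_mulRight, mul_assoc]

open LieAlgebra LinearMap in
theorem LieAlgebra.ad_pow_char (c : A) : ad 𝕜 A (c ^ p) = ad 𝕜 A c ^ p := by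
  have had : ∀ d : A, ad 𝕜 A d = mulLeft 𝕜 d - mulRight 𝕜 d :=
    congrFun (ad_eq_lmul_left_sub_lmul_right (R := 𝕜) A)
  conv_rhs => rw [← Nat.sub_add_cancel hp.out.one_le, pow_succ]
  rw [ad_pow_char_sub_one, had c, (commute_mulLeft_right c c).geom_sum₂_mul, pow_mulLeft,
    pow_mulRight, had]

theorem LieAlgebra.ad_pow_char_pow (c : A) (n : ℕ) :
    ad 𝕜 A (c ^ p ^ n) = ad 𝕜 A c ^ p ^ n := by
  induction n with
  | zero => simp
  | succ n ih => rw [pow_succ, pow_mul, ad_pow_char, ih, ← pow_mul]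

theorem Polynomial.derivative_pow_eq_sum {R : Type*} [Semiring R] (f : R[X]) (n : ℕ) :
    derivative (f ^ n) = ∑ k ∈ range n, f ^ k * derivative f * f ^ (n - 1 - k) := by
  induction n with
  | zero => simp
  | succ n ih =>
    rw [pow_succ', derivative_mul, ih, mul_sum, sum_range_succ', add_comm]
    simp only [← mul_assoc, ← pow_succ', pow_zero, one_mul, Nat.sub_zero, Nat.add_sub_cancel,
      Nat.sub_sub, add_comm 1]

section Jacobson

open LieAlgebra Set

variable {M : Submodule 𝕜 A} {a b : A}

theorem Polynomial.coeff_lie_C (c : A) (g : A[X]) (n : ℕ) :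
    ⁅C c, g⁆.coeff n = ⁅c, g.coeff n⁆ := by
  simp [Ring.lie_def, coeff_C_mul, coeff_mul_C]

theorem Polynomial.lie_C_mul_X_add_C (g : A[X]) :
    ⁅C a * X + C b, g⁆ = ⁅C a, g⁆ * X + ⁅C b, g⁆ := by
  simp only [Ring.lie_def, add_mul, mul_add, sub_mul, mul_assoc, (commute_X g).eq]
  abel

theorem mapsTo_ad_linear (ha : MapsTo (ad 𝕜 A a) M M) (hb : MapsTo (ad 𝕜 A b) M M) :
    MapsTo (ad 𝕜 A[X] (C a * X + C b)) {g | ∀ n, g.coeff n ∈ M} {g | ∀ n, g.coeff n ∈ M} := by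
  intro g hg n
  rw [ad_apply, lie_C_mul_X_add_C, coeff_add, coeff_lie_C]
  refine M.add_mem ?_ (hb (hg n))
  cases n with
  | zero => simp
  | succ n => rw [coeff_mul_X, coeff_lie_C]; exact ha (hg n)

theorem coeff_derivative_linear_pow_char_mem (hab : ⁅a, b⁆ ∈ M) (ha : MapsTo (ad 𝕜 A a) M M)
    (hb : MapsTo (ad 𝕜 A b) M M) (n : ℕ) :
    (derivative ((C a * X + C b) ^ p)).coeff n ∈ M := by
  obtain ⟨q, hq⟩ : ∃ q, p - 1 = q + 1 := ⟨p - 2, by have := hp.out.two_le; omega⟩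
  have hbase : ad 𝕜 A[X] (C a * X + C b) (C a) = C ⁅b, a⁆ := by
    rw [ad_apply, lie_C_mul_X_add_C, lie_self, zero_mul, zero_add, Ring.lie_def, Ring.lie_def,
      C_sub, C_mul, C_mul]
  rw [derivative_pow_eq_sum, derivative_add, derivative_C_mul_X, derivative_C, add_zero,
    ← ad_pow_char_sub_one_apply (𝕜 := 𝕜), hq, pow_succ, Module.End.mul_apply, hbase,
    Module.End.coe_pow]
  refine (mapsTo_ad_linear ha hb).iterate q ?_ n
  intro k
  rw [coeff_C]
  split_ifs
  · rw [← lie_skew]; exact M.neg_mem hab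
  · exact M.zero_mem

theorem coeff_linear_pow_char_mem (hab : ⁅a, b⁆ ∈ M) (ha : MapsTo (ad 𝕜 A a) M M)
    (hb : MapsTo (ad 𝕜 A b) M M) {n : ℕ} (hn₀ : 0 < n) (hn : n < p) :
    ((C a * X + C b) ^ p).coeff n ∈ M := by
  obtain ⟨k, rfl⟩ : ∃ k, n = k + 1 := ⟨n - 1, by omega⟩
  have hk : ((k + 1 : ℕ) : 𝕜) ≠ 0 := by
    rw [Ne, CharP.cast_eq_zero_iff 𝕜 p]
    exact fun h => absurd (Nat.le_of_dvd hn₀ h) (by omega)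
  have h := coeff_derivative_linear_pow_char_mem hab ha hb k
  rwa [coeff_derivative, ← Nat.cast_succ, ← map_natCast (algebraMap 𝕜 A), ← Algebra.commutes,
    ← Algebra.smul_def, M.smul_mem_iff hk] at h

theorem add_pow_char_sub_pow_char_sub_pow_char_mem (hab : ⁅a, b⁆ ∈ M)
    (ha : MapsTo (ad 𝕜 A a) M M) (hb : MapsTo (ad 𝕜 A b) M M) :
    (a + b) ^ p - a ^ p - b ^ p ∈ M := by
  set f : A[X] := C a * X + C b
  have hdeg : (f ^ p).natDegree < p + 1 :=
    Nat.lt_succ_of_le <|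
      natDegree_pow_le.trans (mul_le_of_le_one_right p.zero_le natDegree_linear_le)
  have hsum : (a + b) ^ p = ∑ n ∈ range (p + 1), (f ^ p).coeff n := by
    have h : (f ^ p).eval 1 = f.eval 1 ^ p :=
      map_pow (eval₂RingHom' (RingHom.id A) 1 fun _ => Commute.one_right _) f p
    simpa [f, eval_eq_sum_range' hdeg] using h.symm
  have h0 : (f ^ p).coeff 0 = b ^ p := by
    rw [← constantCoeff_apply, map_pow]; simp [f]
  have htop : (f ^ p).coeff p = a ^ p := by
    simpa [f] using coeff_pow_of_natDegree_le (m := p) (natDegree_linear_le (a := a) (b := b))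
  obtain ⟨q, hq⟩ : ∃ q, p = q + 1 := ⟨p - 1, (Nat.sub_add_cancel hp.out.one_le).symm⟩
  rw [hsum, sum_range_succ, hq, sum_range_succ', ← hq, h0, htop, add_sub_cancel_right,
    add_sub_cancel_right]
  exact M.sum_mem fun n hn => coeff_linear_pow_char_mem hab ha hb n.succ_pos (by simp at hn; omega)

theorem mapsTo_ad_pow_char_pow {t : A} (ht : MapsTo (ad 𝕜 A t) M M) (n : ℕ) :
    MapsTo (ad 𝕜 A (t ^ p ^ n)) M M := by
  rw [ad_pow_char_pow, Module.End.coe_pow]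
  exact ht.iterate _

theorem lie_pow_char_pow_mem {t s : A} (ht : t ∈ M) (htM : MapsTo (ad 𝕜 A t) M M)
    (hs : MapsTo (ad 𝕜 A s) M M) (n : ℕ) : ⁅t ^ p ^ n, s⁆ ∈ M := by
  obtain ⟨k, hk⟩ : ∃ k, p ^ n = k + 1 :=
    ⟨p ^ n - 1, (Nat.sub_add_cancel (Nat.one_le_pow _ _ hp.out.pos)).symm⟩
  have hts : ⁅t, s⁆ ∈ M := by rw [← lie_skew]; exact M.neg_mem (hs ht)
  rw [← ad_apply (R := 𝕜), ad_pow_char_pow, hk, pow_succ, Module.End.mul_apply,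
    Module.End.coe_pow]
  exact htM.iterate k hts

theorem sum_pow_char_sub_sum_pow_char_mem {ι : Type*} (s : Finset ι) (T : ι → A)
    (hT : ∀ i ∈ s, MapsTo (ad 𝕜 A (T i)) M M) (hTT : ∀ i ∈ s, ∀ j ∈ s, ⁅T i, T j⁆ ∈ M) :
    (∑ i ∈ s, T i) ^ p - ∑ i ∈ s, T i ^ p ∈ M := by
  classical
  induction s using Finset.induction_on with
  | empty => simp [zero_pow hp.out.ne_zero]
  | insert j s hj ih =>
    simp only [Finset.forall_mem_insert] at hT hTT
    have hjs : ⁅T j, ∑ i ∈ s, T i⁆ ∈ M := by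
      rw [lie_sum]; exact M.sum_mem fun i hi => hTT.1.2 i hi
    have hsM : MapsTo (ad 𝕜 A (∑ i ∈ s, T i)) M M := fun x hx => by
      rw [map_sum, LinearMap.sum_apply]; exact M.sum_mem fun i hi => hT.2 i hi hx
    have key := add_pow_char_sub_pow_char_sub_pow_char_mem hjs hT.1 hsM
    rw [sum_insert hj, sum_insert hj]
    convert M.add_mem key (ih hT.2 fun i hi k hk => (hTT.2 i hi).2 k hk) using 1
    abel

end Jacobson

end CharP

theorem stmt12 (p : ℕ) (hp : 0 < p)
    (𝕜 : Type u) [Field 𝕜] [CharP 𝕜 p]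
    (L : Type v) [LieRing L] [LieAlgebra 𝕜 L]
    (E : Module.End 𝕜 L) (m : ℕ) (X : ℕ → L)
    (hE : E = ∑ i ∈ Finset.range (m + 1), (LieAlgebra.ad 𝕜 L (X i)) ^ p ^ i) :
    ∃ (m' : ℕ) (Y : ℕ → L),
      E ^ p = ∑ j ∈ Finset.range (m' + 1), (LieAlgebra.ad 𝕜 L (Y j)) ^ p ^ j := by
  have : NeZero p := ⟨hp.ne'⟩
  have := CharP.char_is_prime_of_pos 𝕜 p
  let M := LinearMap.range (LieAlgebra.ad 𝕜 L : L →ₗ[𝕜] Module.End 𝕜 L)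
  have had (x : L) :
      Set.MapsTo (LieAlgebra.ad 𝕜 (Module.End 𝕜 L) (LieAlgebra.ad 𝕜 L x)) M M := by
    rintro _ ⟨z, rfl⟩
    exact ⟨⁅x, z⁆, (LieAlgebra.ad 𝕜 L).map_lie x z⟩
  obtain ⟨y, hy⟩ := sum_pow_char_sub_sum_pow_char_mem (M := M) (range (m + 1))
    (fun i => LieAlgebra.ad 𝕜 L (X i) ^ p ^ i) (fun i _ => mapsTo_ad_pow_char_pow (had _) i)
    fun i _ j _ => lie_pow_char_pow_mem (LinearMap.mem_range_self _ _) (had _)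
      (mapsTo_ad_pow_char_pow (had _) j) i
  simp only [← pow_mul, ← pow_succ, ← hE, eq_sub_iff_add_eq'] at hy
  refine ⟨m + 1, fun j => if j = 0 then y else X (j - 1), ?_⟩
  rw [sum_range_succ', ← hy]
  simp
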